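/- Second reduction formula in the third parameter: for z ≠ 0, γ ≠ 0, α ≠ 0, E_{α,β}^{γ+1}(z) = [E_{α,β−α−1}^γ(z) + (1 − β + α) E_{α,β−α}^γ(z)] / (αγz). -/

import Mathlib

open scoped Real
open Complex Filter

/-- The Prabhakar (three-parameter Mittag-Leffler) function, defined by its
entire power series, with reciprocal Gamma understood as `0` at poles. -/
noncomputable def prabhakar (α β γ z : ℂ) : ℂ :=
  ∑' k : ℕ, (ascPochhammer ℂ k).eval γ * z ^ k / ((Nat.factorial k : ℂ) * Complex.Gamma (α * k + β))

/-
Let `tₖ` be the `k`-th term of `E_{α,β}^γ(z)`. Termwise, `1 / Γ(s - 1) = (s - 1) / Γ(s)` gives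
`E_{α,β-1}^γ + (1 - β) E_{α,β}^γ = α ∑ k tₖ`, and the index shift with `(γ)ₖ₊₁ = γ (γ + 1)ₖ`
gives `∑ k tₖ = γ z E_{α,α+β}^{γ+1}` (these are `z` times the two derivative formulas);
now put `β - α` for `β`. Splitting the first sum needs convergence, which is the ratio test:
`Γ(w) / Γ(w + α) = B(w, α) / Γ(α) → 0` as `Re w → ∞`, by dominated convergence in the Beta
integral.
-/

namespace Complex

open Topology MeasureTheory Set Interval

lemma tendsto_betaIntegral_comap_re_atTop {v : ℂ} (hv : 0 < v.re) :
    Tendsto (fun u => betaIntegral u v) (comap re atTop) (𝓝 0) := by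
  have hre : ∀ᶠ u in comap re atTop, 1 ≤ u.re := tendsto_comap.eventually_ge_atTop 1
  have hI : Ι (0 : ℝ) 1 = Ioc 0 1 := uIoc_of_le zero_le_one
  simpa [betaIntegral] using intervalIntegral.tendsto_integral_filter_of_dominated_convergence
    (F := fun u (x : ℝ) => (x : ℂ) ^ (u - 1) * (1 - (x : ℂ)) ^ (v - 1)) (f := fun _ => 0)
    (μ := volume) (fun x => ‖(1 - (x : ℂ)) ^ (v - 1)‖)
    (hre.mono fun u hu => (betaIntegral_convergent (by linarith) hv).def'.aestronglyMeasurable)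
    (hre.mono fun u hu => ae_of_all _ fun x hx => by
      rw [hI] at hx
      rw [norm_mul, norm_cpow_eq_rpow_re_of_pos hx.1, sub_re, one_re]
      exact mul_le_of_le_one_left (norm_nonneg _)
        (Real.rpow_le_one hx.1.le hx.2 (by linarith)))
    (by simpa using (betaIntegral_convergent (u := 1) (by simp) hv).norm)
    ((ae_iff.2 (by simp) : ∀ᵐ x ∂volume, x ≠ (1 : ℝ)).mono fun x hx1 hx => by
      rw [hI] at hx
      have hx' : x < 1 := lt_of_le_of_ne hx.2 hx1
      rw [tendsto_zero_iff_norm_tendsto_zero]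
      simp_rw [norm_mul, norm_cpow_eq_rpow_re_of_pos hx.1, sub_re, one_re]
      have hpow : Tendsto (fun u : ℂ => x ^ (u.re + -1)) (comap re atTop) (𝓝 0) :=
        (tendsto_rpow_atTop_of_base_lt_one x (by linarith [hx.1]) hx').comp
          (tendsto_atTop_add_const_right _ (-1) tendsto_comap)
      simpa [sub_eq_add_neg] using hpow.mul_const ‖(1 - (x : ℂ)) ^ (v - 1)‖)

lemma tendsto_Gamma_div_Gamma_add_comap_re_atTop {v : ℂ} (hv : 0 < v.re) :
    Tendsto (fun u => Gamma u / Gamma (u + v)) (comap re atTop) (𝓝 0) := by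
  have hB : ∀ᶠ u in comap re atTop, betaIntegral u v / Gamma v = Gamma u / Gamma (u + v) :=
    (tendsto_comap.eventually_gt_atTop 0).mono fun u hu => by
      rw [betaIntegral_eq_Gamma_mul_div u v hu hv]
      field_simp [Gamma_ne_zero_of_re_pos hv]
  simpa using ((tendsto_betaIntegral_comap_re_atTop hv).div_const (Gamma v)).congr' hB

end Complex

noncomputable def prabhakarTerm (α β γ z : ℂ) (k : ℕ) : ℂ :=
  (ascPochhammer ℂ k).eval γ * z ^ k / ((Nat.factorial k : ℂ) * Gamma (α * k + β))

lemma prabhakar_eq_tsum (α β γ z : ℂ) :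
    prabhakar α β γ z = ∑' k, prabhakarTerm α β γ z k :=
  rfl

section

open Topology

variable (α β γ z : ℂ) (k : ℕ)

lemma prabhakarTerm_succ_of_Gamma_ne_zero (hΓ : Gamma (α * k + β) ≠ 0) :
    prabhakarTerm α β γ z (k + 1) =
      (γ + k) * z / (k + 1) * (Gamma (α * k + β) / Gamma (α * k + β + α)) *
        prabhakarTerm α β γ z k := by
  have hk : (k : ℂ) + 1 ≠ 0 := Nat.cast_add_one_ne_zero k
  simp only [prabhakarTerm, ascPochhammer_succ_eval, Nat.factorial_succ, pow_succ]
  push_cast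
  rw [show α * (k + 1) + β = α * k + β + α by ring]
  generalize Gamma (α * k + β) = G at hΓ ⊢
  field_simp

lemma norm_add_natCast_div_le : ‖(γ + k) / (k + 1)‖ ≤ ‖γ‖ + 1 := by
  have hk : ‖(k : ℂ) + 1‖ = k + 1 := by exact_mod_cast norm_natCast (k + 1)
  rw [norm_div, hk, div_le_iff₀ (by positivity)]
  calc ‖γ + k‖ ≤ ‖γ‖ + k := (norm_add_le _ _).trans_eq (by rw [norm_natCast])
    _ ≤ (‖γ‖ + 1) * (k + 1) := by nlinarith [norm_nonneg γ, k.cast_nonneg (α := ℝ)]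

variable {α} in
lemma summable_prabhakarTerm (hα : 0 < α.re) : Summable (prabhakarTerm α β γ z) := by
  have hw : Tendsto (fun k : ℕ => α * k + β) atTop (comap re atTop) := by
    refine tendsto_comap_iff.2 ?_
    simpa [Function.comp_def] using tendsto_atTop_add_const_right _ β.re
      (tendsto_natCast_atTop_atTop.const_mul_atTop hα)
  have hratio : Tendsto (fun k : ℕ => (γ + k) * z / (k + 1) *
      (Gamma (α * k + β) / Gamma (α * k + β + α))) atTop (𝓝 0) := by
    have hΓ : Tendsto (fun k : ℕ => ‖Gamma (α * k + β) / Gamma (α * k + β + α)‖)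
        atTop (𝓝 0) := by
      simpa only [Function.comp_def, norm_zero] using
        ((tendsto_Gamma_div_Gamma_add_comap_re_atTop hα).comp hw).norm
    refine squeeze_zero_norm (fun k => ?_)
      (by simpa only [mul_zero] using hΓ.const_mul ((‖γ‖ + 1) * ‖z‖))
    rw [mul_div_right_comm, norm_mul, norm_mul]
    gcongr
    exact norm_add_natCast_div_le γ k
  refine summable_of_ratio_norm_eventually_le (r := 1 / 2) (by norm_num) ?_
  filter_upwards [hw.eventually (tendsto_comap.eventually_gt_atTop 0),
    NormedAddGroup.tendsto_nhds_zero.1 hratio (1 / 2) (by norm_num)] with k hk hratio_k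
  rw [prabhakarTerm_succ_of_Gamma_ne_zero α β γ z k (Gamma_ne_zero_of_re_pos hk), norm_mul]
  exact mul_le_mul_of_nonneg_right hratio_k.le (norm_nonneg _)

lemma prabhakarTerm_sub_one :
    prabhakarTerm α (β - 1) γ z k = (α * k + β - 1) * prabhakarTerm α β γ z k := by
  have hΓ := one_div_Gamma_eq_self_mul_one_div_Gamma_add_one (α * k + β - 1)
  rw [sub_add_cancel] at hΓ
  simp only [prabhakarTerm, div_eq_mul_inv, mul_inv, ← add_sub_assoc, hΓ]
  ring

lemma succ_mul_prabhakarTerm_succ :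
    (k + 1) * prabhakarTerm α β γ z (k + 1) =
      γ * z * prabhakarTerm α (α + β) (γ + 1) z k := by
  have hk : (k : ℂ) + 1 ≠ 0 := Nat.cast_add_one_ne_zero k
  simp only [prabhakarTerm, ascPochhammer_succ_left, Polynomial.eval_mul, Polynomial.eval_X,
    Polynomial.eval_comp, Polynomial.eval_add, Polynomial.eval_one, Nat.factorial_succ, pow_succ]
  push_cast
  rw [show α * (k + 1) + β = α * k + (α + β) by ring]
  field_simp

lemma tsum_natCast_mul_prabhakarTerm :
    ∑' k : ℕ, k * prabhakarTerm α β γ z k = γ * z * prabhakar α (α + β) (γ + 1) z := by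
  have hshift := Nat.succ_injective.tsum_eq (f := fun k : ℕ => k * prabhakarTerm α β γ z k)
    (fun k hk => (Nat.exists_eq_succ_of_ne_zero (by rintro rfl; simp at hk)).imp fun _ h => h.symm)
  rw [← hshift, prabhakar_eq_tsum, ← tsum_mul_left]
  push_cast [Nat.succ_eq_add_one]
  exact tsum_congr fun k => succ_mul_prabhakarTerm_succ α β γ z k

end

theorem prabhakar_sub_one_add_one_sub_mul (α β γ z : ℂ) (hα : 0 < α.re) :
    prabhakar α (β - 1) γ z + (1 - β) * prabhakar α β γ z =
      α * γ * z * prabhakar α (α + β) (γ + 1) z := by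
  have hsum : prabhakar α (β - 1) γ z + (1 - β) * prabhakar α β γ z =
      α * ∑' k : ℕ, k * prabhakarTerm α β γ z k := by
    have h₁ := summable_prabhakarTerm (β - 1) γ z hα
    have h₂ := (summable_prabhakarTerm β γ z hα).mul_left (1 - β)
    rw [prabhakar_eq_tsum, prabhakar_eq_tsum, ← tsum_mul_left, ← tsum_mul_left, ← h₁.tsum_add h₂]
    refine tsum_congr fun k => ?_
    rw [prabhakarTerm_sub_one]
    ring
  rw [hsum, tsum_natCast_mul_prabhakarTerm]
  ring

theorem prabhakar_reduction'_general (α β γ : ℂ) (hα : 0 < α.re) (hγ : γ ≠ 0)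
    (z : ℂ) (hz : z ≠ 0) :
    prabhakar α β (γ + 1) z =
      (prabhakar α (β - α - 1) γ z + (1 - β + α) * prabhakar α (β - α) γ z) / (α * γ * z) := by
  have hα0 : α ≠ 0 := fun h => by simp [h] at hα
  have h := prabhakar_sub_one_add_one_sub_mul α (β - α) γ z hα
  rw [add_sub_cancel] at h
  rw [eq_div_iff (by simp [hα0, hγ, hz])]
  linear_combination -h

theorem prabhakar_reduction' (α β γ : ℂ) (hα : 0 < α.re) (hα0 : α ≠ 0) (hγ : γ ≠ 0)
    (z : ℂ) (hz : z ≠ 0) :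
    prabhakar α β (γ + 1) z =
      (prabhakar α (β - α - 1) γ z + (1 - β + α) * prabhakar α (β - α) γ z) / (α * γ * z) :=
  prabhakar_reduction'_general α β γ hα hγ z hz
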